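/- (Tensorization) Let G=(V,q) be a reversible stochastically complete graph with heat semigroup P_t, and let G̃=(V×V,q̃) be a coupling graph of G with heat semigroup P̃_t. Then for all bounded f:V→ℝ and all t ≥ 0: P̃_t(1⊗f) = 1⊗(P_t f) and P̃_t(f⊗1) = (P_t f)⊗1. -/

import Mathlib

open scoped BigOperators Classical

namespace OllivierGraph

variable {V : Type*}

/-- A graph structure on `V`: non-negative edge weights with finitely many
neighbours for every vertex. -/
def IsGraph (q : V → V → ℝ) : Prop :=
  (∀ x y, 0 ≤ q x y) ∧ ∀ x, {y | 0 < q x y}.Finite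

/-- `m` is an invariant measure for `q`, i.e. `q` is reversible w.r.t. `m`. -/
def IsInvariantMeasure (q : V → V → ℝ) (m : V → ℝ) : Prop :=
  (∀ x, 0 < m x) ∧ ∀ x y, q x y * m x = q y x * m y

/-- Reversibility (undirectedness) of the graph. -/
def IsReversible (q : V → V → ℝ) : Prop :=
  ∃ m : V → ℝ, IsInvariantMeasure q m

/-- The graph Laplacian `Δ f (x) = Σ_y q(x,y)(f(y) - f(x))`. -/
noncomputable def lap (q : V → V → ℝ) (f : V → ℝ) (x : V) : ℝ :=
  ∑' y, q x y * (f y - f x)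

/-- The set of lengths of walks from `x` to `y`. -/
def walkLens (q : V → V → ℝ) (x y : V) : Set ℕ :=
  {n | ∃ p : ℕ → V, p 0 = x ∧ p n = y ∧ ∀ i < n, 0 < q (p i) (p (i + 1))}

/-- The combinatorial distance. -/
noncomputable def gdist (q : V → V → ℝ) (x y : V) : ℕ :=
  sInf (walkLens q x y)

/-- Connectedness: every two vertices are joined by some walk. -/
def GConnected (q : V → V → ℝ) : Prop :=
  ∀ x y : V, (walkLens q x y).Nonempty

/-- `q_min`: the infimum of the positive edge weights. -/
noncomputable def qmin (q : V → V → ℝ) : ℝ :=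
  sInf {c : ℝ | 0 < c ∧ ∃ x y, q x y = c}

/-- Boundedness of a real valued function. -/
def IsBoundedFun (f : V → ℝ) : Prop := ∃ C, ∀ x, |f x| ≤ C

/-- Supremum norm. -/
noncomputable def supNorm (f : V → ℝ) : ℝ := ⨆ x, |f x|

/-- `∇_{xy} f = (f(x) - f(y)) / d(x,y)`. -/
noncomputable def gradxy (q : V → V → ℝ) (f : V → ℝ) (x y : V) : ℝ :=
  (f x - f y) / (gdist q x y : ℝ)

/-- `‖∇ f‖_∞ = sup_{x ≠ y} |∇_{xy} f|`. -/
noncomputable def gradNorm (q : V → V → ℝ) (f : V → ℝ) : ℝ :=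
  ⨆ p : {p : V × V // p.1 ≠ p.2}, |gradxy q f p.1.1 p.1.2|

/-- Ollivier curvature `κ(x,y)`. -/
noncomputable def kappa (q : V → V → ℝ) (x y : V) : ℝ :=
  sInf {c | ∃ f : V → ℝ, gradxy q f y x = 1 ∧ gradNorm q f = 1 ∧
    c = gradxy q (lap q f) x y}

/-- Non-negative Ollivier curvature. -/
def NonnegOllivier (q : V → V → ℝ) : Prop :=
  ∀ x y : V, x ≠ y → 0 ≤ kappa q x y

/-- Transport plan from `x0` to `y0`. -/
def IsTransportPlan (q : V → V → ℝ) (x0 y0 : V) (ρ : V → V → ℝ) : Prop :=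
  (∀ x y, 0 ≤ ρ x y) ∧
  (∀ x, x ≠ x0 → ∑' y, ρ x y = q x0 x) ∧
  (∀ y, y ≠ y0 → ∑' x, ρ x y = q y0 y)

/-- The cost of a transport plan. -/
noncomputable def cost (q : V → V → ℝ) (x0 y0 : V) (ρ : V → V → ℝ) : ℝ :=
  ∑' p : V × V, ρ p.1 p.2 * ((gdist q x0 y0 : ℝ) - (gdist q p.1 p.2 : ℝ))

/-- `μ_ρ(k)`: the mass transported over distance `d(x0,y0) + k`. -/
noncomputable def muRho (q : V → V → ℝ) (x0 y0 : V) (ρ : V → V → ℝ) (k : ℤ) : ℝ :=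
  ∑' p : V × V,
    if (gdist q p.1 p.2 : ℤ) - (gdist q x0 y0 : ℤ) = k then ρ p.1 p.2 else 0

/-- Optimality of a transport plan: it maximizes the cost. -/
def IsOptimalPlan (q : V → V → ℝ) (x0 y0 : V) (ρ : V → V → ℝ) : Prop :=
  IsTransportPlan q x0 y0 ρ ∧
  ∀ σ : V → V → ℝ, IsTransportPlan q x0 y0 σ → cost q x0 y0 σ ≤ cost q x0 y0 ρ

/-- A coupling graph of `q`: a graph on `V × V` whose Laplacian tensorizes. -/
def IsCouplingGraph (q : V → V → ℝ) (qt : V × V → V × V → ℝ) : Prop :=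
  IsGraph qt ∧
  ∀ f : V → ℝ,
    (∀ p : V × V, lap qt (fun r => f r.1) p = lap q f p.1) ∧
    (∀ p : V × V, lap qt (fun r => f r.2) p = lap q f p.2)

/-- A perfect coupling graph. -/
def IsPerfectCoupling (q : V → V → ℝ) (qt : V × V → V × V → ℝ) : Prop :=
  IsCouplingGraph q qt ∧
  ∀ x0 y0 : V,
    IsOptimalPlan q x0 y0 (fun x y => qt (x0, y0) (x, y)) ∧
    (∀ k : ℤ, 1 < |k| → muRho q x0 y0 (fun x y => qt (x0, y0) (x, y)) k = 0) ∧
    (x0 ≠ y0 → 2 * qmin q ≤ muRho q x0 y0 (fun x y => qt (x0, y0) (x, y)) (-1))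

/-- Truncated Laplacian `Δ_S`, corresponding to the rates `q_S(x,y) = q(x,y) 1_S(x)`. -/
noncomputable def lapS (q : V → V → ℝ) (S : Finset V) (f : V → ℝ) (x : V) : ℝ :=
  if x ∈ S then lap q f x else 0

/-- Truncated heat semigroup `P_t^S f = Σ_k t^k Δ_S^k (f · 1_S) / k!`. -/
noncomputable def heatS (q : V → V → ℝ) (S : Finset V) (t : ℝ) (f : V → ℝ) (x : V) : ℝ :=
  ∑' k : ℕ, t ^ k / (Nat.factorial k : ℝ) *
    ((lapS q S)^[k] (fun v => if v ∈ S then f v else 0)) x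

/-- Heat semigroup applied to non-negative functions: supremum of the truncations. -/
noncomputable def heatPos (q : V → V → ℝ) (t : ℝ) (f : V → ℝ) (x : V) : ℝ :=
  ⨆ S : Finset V, heatS q S t f x

/-- Heat semigroup `P_t f := P_t f_+ - P_t f_-`. -/
noncomputable def heat (q : V → V → ℝ) (t : ℝ) (f : V → ℝ) (x : V) : ℝ :=
  heatPos q t (fun v => max (f v) 0) x - heatPos q t (fun v => max (-f v) 0) x

/-- Stochastic completeness: `P_t 1 = 1`. -/
def StochasticallyComplete (q : V → V → ℝ) : Prop :=
  ∀ t : ℝ, 0 ≤ t → ∀ x, heat q t (fun _ => 1) x = 1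

/-- The birth-death chain on `ℕ` with rates `2c` and absorbing state `0`. -/
noncomputable def qBD (c : ℝ) : ℕ → ℕ → ℝ :=
  fun x y => if 0 < x ∧ (x = y + 1 ∨ y = x + 1) then 2 * c else 0

/-- `φ_t(n) = P_t^{ℕ₀} 1_{ℕ₊} (n)`. -/
noncomputable def phiBD (c : ℝ) (t : ℝ) (n : ℕ) : ℝ :=
  heat (qBD c) t (fun k => if 0 < k then 1 else 0) n

/-- `ℓ¹` norm with respect to the measure `m`. -/
noncomputable def l1Norm (m : V → ℝ) (f : V → ℝ) : ℝ := ∑' x, m x * |f x|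

/-- Membership in `ℓ¹(V, m)`. -/
def MemL1 (m : V → ℝ) (f : V → ℝ) : Prop := Summable fun x => m x * |f x|

/-- The `ℓ¹`-Wasserstein distance (via Kantorovich duality). -/
noncomputable def W1 (q : V → V → ℝ) (m : V → ℝ) (μ ν : V → ℝ) : ℝ :=
  sSup {c | ∃ g : V → ℝ, gradNorm q g ≤ 1 ∧ c = ∑' x, m x * (μ x - ν x) * g x}

/-- The Laplacian as a matrix (finite graphs). -/
noncomputable def lapMat [Fintype V] (q : V → V → ℝ) [DecidableEq V] : Matrix V V ℝ :=
  Matrix.of fun x y => q x y - if x = y then ∑ z, q x z else 0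

/-- The heat semigroup `e^{tΔ}` of a finite graph. -/
noncomputable def heatFin [Fintype V] [DecidableEq V] (q : V → V → ℝ) (t : ℝ)
    (f : V → ℝ) : V → ℝ :=
  (NormedSpace.exp (t • lapMat q)).mulVec f

/-- `λ` is an eigenvalue of `-Δ`. -/
def IsLapEigenvalue (q : V → V → ℝ) (lam : ℝ) : Prop :=
  ∃ f : V → ℝ, f ≠ 0 ∧ ∀ x, lap q f x = -lam * f x

/-- Boundary measure `|∂A|` of a set of vertices. -/
noncomputable def boundaryMeasure [Fintype V] [DecidableEq V] (q : V → V → ℝ)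
    (m : V → ℝ) (A : Finset V) : ℝ :=
  ∑ x ∈ A, ∑ y ∈ Aᶜ, m x * q x y

/-- The Cheeger constant of a finite graph. -/
noncomputable def cheeger [Fintype V] [DecidableEq V] (q : V → V → ℝ) (m : V → ℝ) : ℝ :=
  sInf {c | ∃ A : Finset V, 0 < (∑ x ∈ A, m x) ∧ 2 * (∑ x ∈ A, m x) ≤ ∑ x, m x ∧
    c = boundaryMeasure q m A / ∑ x ∈ A, m x}

/-- The diameter of a graph. -/
noncomputable def gdiam (q : V → V → ℝ) : ℝ :=
  ⨆ p : V × V, (gdist q p.1 p.2 : ℝ)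

/-!
The truncated semigroups `P_t^S` (`S` finite) solve the heat equation on `S` killed outside `S`,
so they obey a parabolic minimum principle, and everything follows by comparing them with explicit
super- and subsolutions. If `π : Ṽ → V` intertwines the Laplacians, `(P_t^{π(S̃)} g) ∘ π` is a
supersolution on `S̃`, whence `P̃_t (g ∘ π) ≤ (P_t g) ∘ π`. Conversely, for `0 ≤ g ≤ C` and the box
`S̃ = {π' ∈ S₁, π ∈ S₂}`, the function `(P^{S₂} g) ∘ π + C (P^{S₁} 1) ∘ π' + C (P^{S₂} 1) ∘ π - 2C`
is a subsolution which is nonpositive off `S̃`. As `S₁, S₂ ↑ V`, stochastic completeness turns the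
two correction terms into `C + C`, cancelling `-2C`. A coupling graph intertwines both projections
`V × V → V`, either of which can play the role of `π'`.
-/

open Filter Topology Function

section Laplacian

variable {q : V → V → ℝ}

lemma lap_add_const (q : V → V → ℝ) (g : V → ℝ) (c : ℝ) (x : V) :
    lap q (fun y => g y + c) x = lap q g x := by
  simp only [lap, add_sub_add_right_eq_sub]

lemma lap_sub_const (q : V → V → ℝ) (g : V → ℝ) (c : ℝ) (x : V) :
    lap q (fun y => g y - c) x = lap q g x := by
  simp only [lap, sub_sub_sub_cancel_right]

lemma lap_const (q : V → V → ℝ) (c : ℝ) (x : V) : lap q (fun _ => c) x = 0 := by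
  simp [lap]

lemma lap_const_mul (q : V → V → ℝ) (c : ℝ) (g : V → ℝ) (x : V) :
    lap q (fun y => c * g y) x = c * lap q g x := by
  rw [lap, lap, ← tsum_mul_left]
  exact tsum_congr fun y => by ring

lemma lap_nonneg_of_forall_le {g : V → ℝ} {x : V} (hq : ∀ y, 0 ≤ q x y)
    (hmin : ∀ y, g x ≤ g y) : 0 ≤ lap q g x :=
  tsum_nonneg fun y => mul_nonneg (hq y) (sub_nonneg.2 (hmin y))

lemma summable_lap_summand (hg : IsGraph q) (g : V → ℝ) (x : V) :
    Summable fun y => q x y * (g y - g x) :=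
  summable_of_hasFiniteSupport <| (hg.2 x).subset fun y hy =>
    (hg.1 x y).lt_of_ne (Ne.symm (left_ne_zero_of_mul hy))

lemma lap_add (hg : IsGraph q) (g h : V → ℝ) (x : V) :
    lap q (fun y => g y + h y) x = lap q g x + lap q h x := by
  rw [lap, lap, lap, ← (summable_lap_summand hg g x).tsum_add (summable_lap_summand hg h x)]
  exact tsum_congr fun y => by ring

lemma lap_sub (hg : IsGraph q) (g h : V → ℝ) (x : V) :
    lap q (fun y => g y - h y) x = lap q g x - lap q h x := by
  rw [lap, lap, lap, ← (summable_lap_summand hg g x).tsum_sub (summable_lap_summand hg h x)]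
  exact tsum_congr fun y => by ring

lemma lapS_le_lap {S : Finset V} {h : V → ℝ} {x : V} (hq : ∀ y, 0 ≤ q x y)
    (hh : ∀ y, 0 ≤ h y) (hx : x ∉ S → h x = 0) : lapS q S h x ≤ lap q h x := by
  by_cases hxS : x ∈ S
  · rw [lapS, if_pos hxS]
  · rw [lapS, if_neg hxS]
    exact lap_nonneg_of_forall_le hq fun y => (hx hxS).symm ▸ hh y

end Laplacian

lemma HasDerivAt.nonpos_of_eventually_le_left {f : ℝ → ℝ} {f' τ : ℝ} (hf : HasDerivAt f f' τ)
    (h : ∀ᶠ s in 𝓝[<] τ, f τ ≤ f s) : f' ≤ 0 := by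
  have hslope : Tendsto (slope f τ) (𝓝[<] τ) (𝓝 f') :=
    (hasDerivAt_iff_tendsto_slope.1 hf).mono_left (nhdsWithin_mono τ fun s hs => ne_of_lt hs)
  refine le_of_tendsto hslope ?_
  filter_upwards [h, self_mem_nhdsWithin] with s hfs hs
  rw [slope_def_field]
  exact div_nonpos_of_nonneg_of_nonpos (sub_nonneg.2 hfs) (sub_nonpos.2 (le_of_lt hs))

section MinimumPrinciple

variable {q : V → V → ℝ} {S : Finset V}

theorem pos_of_strict_supersolution (hq : ∀ x y, 0 ≤ q x y) {u u' : ℝ → V → ℝ}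
    (hderiv : ∀ x ∈ S, ∀ s, HasDerivAt (fun s => u s x) (u' s x) s)
    (hsuper : ∀ s, 0 ≤ s → ∀ x ∈ S, lap q (u s) x < u' s x)
    (hbdry : ∀ s, 0 ≤ s → ∀ x ∉ S, 0 < u s x)
    (hinit : ∀ x ∈ S, 0 < u 0 x) {t : ℝ} (ht : 0 ≤ t) (x : V) : 0 < u t x := by
  by_cases hx : x ∈ S
  swap
  · exact hbdry t ht x hx
  by_contra! hneg
  set A : Set ℝ := Set.Icc 0 t ∩ ⋃ y ∈ S, {s | u s y ≤ 0}
  have hA : IsCompact A := isCompact_Icc.inter_right <| isClosed_biUnion_finset fun y hy =>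
    isClosed_le (continuous_iff_continuousAt.2 fun s => (hderiv y hy s).continuousAt)
      continuous_const
  obtain ⟨τ, ⟨⟨hτ0, hτt⟩, hτneg⟩, hτfirst⟩ := hA.exists_isLeast ⟨t, ⟨ht, le_rfl⟩, by
    simp only [Set.mem_iUnion]; exact ⟨x, hx, hneg⟩⟩
  simp only [Set.mem_iUnion, Set.mem_ofPred] at hτneg
  obtain ⟨y₀, hy₀, hy₀neg⟩ := hτneg
  have hbefore : ∀ s, 0 ≤ s → s < τ → ∀ y ∈ S, 0 < u s y := by
    intro s hs hsτ y hy
    by_contra! hsy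
    have : τ ≤ s := hτfirst ⟨⟨hs, hsτ.le.trans hτt⟩, by
      simp only [Set.mem_iUnion]; exact ⟨y, hy, hsy⟩⟩
    linarith
  have hτpos : 0 < τ := hτ0.lt_of_ne fun h => by
    have := hinit y₀ hy₀; rw [← h] at hy₀neg; linarith
  -- a minimiser of `u τ` over `S` is a global one, as `u τ > 0` off `S`
  obtain ⟨z, hz, hzmin⟩ := S.exists_min_image (u τ) ⟨y₀, hy₀⟩
  have hzneg : u τ z ≤ 0 := (hzmin y₀ hy₀).trans hy₀neg
  have hglobal : ∀ y, u τ z ≤ u τ y := fun y => by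
    by_cases hy : y ∈ S
    · exact hzmin y hy
    · exact hzneg.trans (hbdry τ hτ0 y hy).le
  have hderiv_pos : 0 < u' τ z :=
    (lap_nonneg_of_forall_le (hq z) hglobal).trans_lt (hsuper τ hτ0 z hz)
  have hderiv_nonpos : u' τ z ≤ 0 :=
    HasDerivAt.nonpos_of_eventually_le_left (hderiv z hz τ) <| by
      filter_upwards [Ioo_mem_nhdsLT hτpos] with s hs
      exact hzneg.trans (hbefore s hs.1.le hs.2 z hz).le
  linarith

theorem nonneg_of_supersolution (hq : ∀ x y, 0 ≤ q x y) {w w' : ℝ → V → ℝ}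
    (hderiv : ∀ x ∈ S, ∀ s, HasDerivAt (fun s => w s x) (w' s x) s)
    (hsuper : ∀ s, 0 ≤ s → ∀ x ∈ S, lap q (w s) x ≤ w' s x)
    (hbdry : ∀ s, 0 ≤ s → ∀ x ∉ S, 0 ≤ w s x)
    (hinit : ∀ x ∈ S, 0 ≤ w 0 x) {t : ℝ} (ht : 0 ≤ t) (x : V) : 0 ≤ w t x := by
  -- `w + δ (1 + s)` is a strict supersolution, since `Δ` kills constants
  have hpert : ∀ δ > 0, 0 < w t x + δ * (1 + t) := fun δ hδ =>
    pos_of_strict_supersolution hq (u := fun s y => w s y + δ * (1 + s))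
      (u' := fun s y => w' s y + δ)
      (fun y hy s => ((hderiv y hy s).add
        (((hasDerivAt_id' s).const_add 1).const_mul δ)).congr_deriv (by rw [mul_one]))
      (fun s hs y hy => by rw [lap_add_const]; linarith [hsuper s hs y hy])
      (fun s hs y hy => by nlinarith [hbdry s hs y hy])
      (fun y hy => by linarith [hinit y hy]) ht x
  refine le_of_forall_pos_lt_add fun ε hε => ?_
  have := hpert (ε / (1 + t)) (by positivity)
  rwa [div_mul_cancel₀ _ (by positivity)] at this

end MinimumPrinciple

section TruncatedHeat

open NormedSpace

variable {q : V → V → ℝ} {S : Finset V}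

noncomputable def zeroExtend (S : Finset V) (v : S → ℝ) : V → ℝ :=
  fun x => if hx : x ∈ S then v ⟨x, hx⟩ else 0

lemma zeroExtend_of_mem (v : S → ℝ) {x : V} (hx : x ∈ S) : zeroExtend S v x = v ⟨x, hx⟩ :=
  dif_pos hx

lemma zeroExtend_of_not_mem (v : S → ℝ) {x : V} (hx : x ∉ S) : zeroExtend S v x = 0 :=
  dif_neg hx

noncomputable def lapOn (hg : IsGraph q) (S : Finset V) : (S → ℝ) →L[ℝ] (S → ℝ) :=
  LinearMap.toContinuousLinearMap
    { toFun := fun v i => lap q (zeroExtend S v) i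
      map_add' := fun v w => funext fun i => by
        rw [Pi.add_apply, ← lap_add hg]
        congr 1; funext x; by_cases hx : x ∈ S <;> simp [zeroExtend, hx]
      map_smul' := fun c v => funext fun i => by
        rw [RingHom.id_apply, Pi.smul_apply, smul_eq_mul, ← lap_const_mul]
        congr 1; funext x; by_cases hx : x ∈ S <;> simp [zeroExtend, hx] }

lemma lapS_zeroExtend (hg : IsGraph q) (v : S → ℝ) :
    lapS q S (zeroExtend S v) = zeroExtend S (lapOn hg S v) := by
  funext x
  by_cases hx : x ∈ S
  · rw [lapS, if_pos hx, zeroExtend_of_mem _ hx]; rfl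
  · rw [lapS, if_neg hx, zeroExtend_of_not_mem _ hx]

lemma heatS_eq_zeroExtend_exp (hg : IsGraph q) (S : Finset V) (t : ℝ) (f : V → ℝ) :
    heatS q S t f = zeroExtend S (exp (t • lapOn hg S) fun i => f i) := by
  set L := lapOn hg S
  set r : S → ℝ := fun i => f i
  have hiter : ∀ k, (lapS q S)^[k] (zeroExtend S r) = zeroExtend S ((⇑L)^[k] r) := by
    intro k
    induction k with
    | zero => rfl
    | succ k ih => rw [iterate_succ_apply', iterate_succ_apply', ih, lapS_zeroExtend hg]
  have hr : (fun v => if v ∈ S then f v else 0) = zeroExtend S r := by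
    funext x; by_cases hx : x ∈ S <;> simp [zeroExtend, hx, r]
  funext x
  rw [heatS, hr]
  by_cases hx : x ∈ S
  · let Φ : ((S → ℝ) →L[ℝ] (S → ℝ)) →L[ℝ] ℝ :=
      (ContinuousLinearMap.proj (⟨x, hx⟩ : S)).comp (ContinuousLinearMap.apply ℝ (S → ℝ) r)
    rw [zeroExtend_of_mem _ hx]
    change _ = Φ (exp (t • L))
    rw [exp_eq_tsum ℝ, Φ.map_tsum (expSeries_summable' (𝕂 := ℝ) (t • L))]
    refine tsum_congr fun k => ?_
    simp only [Φ, hiter, zeroExtend_of_mem _ hx, ContinuousLinearMap.comp_apply,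
      ContinuousLinearMap.apply_apply, ContinuousLinearMap.proj_apply,
      smul_apply, smul_pow, FunLike.coe_pow_eq_iterate, Pi.smul_apply,
      smul_eq_mul]
    ring
  · simp [hiter, zeroExtend_of_not_mem _ hx]

lemma heatS_of_not_mem (hg : IsGraph q) (t : ℝ) (f : V → ℝ) {x : V} (hx : x ∉ S) :
    heatS q S t f x = 0 := by
  rw [heatS_eq_zeroExtend_exp hg, zeroExtend_of_not_mem _ hx]

lemma heatS_zero_time (hg : IsGraph q) (f : V → ℝ) (x : V) :
    heatS q S 0 f x = if x ∈ S then f x else 0 := by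
  rw [heatS_eq_zeroExtend_exp hg, zero_smul, exp_zero]
  by_cases hx : x ∈ S <;> simp [zeroExtend, hx]

lemma hasDerivAt_heatS (hg : IsGraph q) (S : Finset V) (f : V → ℝ) (x : V) (t : ℝ) :
    HasDerivAt (fun s => heatS q S s f x) (lapS q S (heatS q S t f) x) t := by
  by_cases hx : x ∈ S
  · have hexp := (hasDerivAt_exp_smul_const' (𝕂 := ℝ) (lapOn hg S) t).clm_apply
      (hasDerivAt_const t fun i : S => f i)
    simp only [map_zero, add_zero] at hexp
    simp only [heatS_eq_zeroExtend_exp hg, zeroExtend_of_mem _ hx, lapS, if_pos hx]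
    exact hasDerivAt_pi.1 hexp ⟨x, hx⟩
  · simp only [heatS_of_not_mem hg _ f hx, lapS, if_neg hx]
    exact hasDerivAt_const t 0

end TruncatedHeat

section Comparison

variable {q : V → V → ℝ} {S : Finset V} {f : V → ℝ}

theorem le_heatS_of_subsolution (hg : IsGraph q) {φ φ' : ℝ → V → ℝ}
    (hderiv : ∀ x ∈ S, ∀ s, HasDerivAt (fun s => φ s x) (φ' s x) s)
    (hsub : ∀ s, 0 ≤ s → ∀ x ∈ S, φ' s x ≤ lap q (φ s) x)
    (hbdry : ∀ s, 0 ≤ s → ∀ x ∉ S, φ s x ≤ 0)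
    (hinit : ∀ x ∈ S, φ 0 x ≤ f x) {t : ℝ} (ht : 0 ≤ t) (x : V) :
    φ t x ≤ heatS q S t f x :=
  sub_nonneg.1 <| nonneg_of_supersolution hg.1 (w := fun s y => heatS q S s f y - φ s y)
    (w' := fun s y => lapS q S (heatS q S s f) y - φ' s y)
    (fun y hy s => (hasDerivAt_heatS hg S f y s).sub (hderiv y hy s))
    (fun s hs y hy => by
      rw [lap_sub hg, lapS, if_pos hy]; linarith [hsub s hs y hy])
    (fun s hs y hy => by rw [heatS_of_not_mem hg s f hy]; linarith [hbdry s hs y hy])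
    (fun y hy => by rw [heatS_zero_time hg, if_pos hy]; linarith [hinit y hy]) ht x

theorem heatS_le_of_supersolution (hg : IsGraph q) {ψ ψ' : ℝ → V → ℝ}
    (hderiv : ∀ x ∈ S, ∀ s, HasDerivAt (fun s => ψ s x) (ψ' s x) s)
    (hsuper : ∀ s, 0 ≤ s → ∀ x ∈ S, lap q (ψ s) x ≤ ψ' s x)
    (hbdry : ∀ s, 0 ≤ s → ∀ x ∉ S, 0 ≤ ψ s x)
    (hinit : ∀ x ∈ S, f x ≤ ψ 0 x) {t : ℝ} (ht : 0 ≤ t) (x : V) :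
    heatS q S t f x ≤ ψ t x :=
  sub_nonneg.1 <| nonneg_of_supersolution hg.1 (w := fun s y => ψ s y - heatS q S s f y)
    (w' := fun s y => ψ' s y - lapS q S (heatS q S s f) y)
    (fun y hy s => (hderiv y hy s).sub (hasDerivAt_heatS hg S f y s))
    (fun s hs y hy => by
      rw [lap_sub hg, lapS, if_pos hy]; linarith [hsuper s hs y hy])
    (fun s hs y hy => by rw [heatS_of_not_mem hg s f hy]; linarith [hbdry s hs y hy])
    (fun y hy => by rw [heatS_zero_time hg, if_pos hy]; linarith [hinit y hy]) ht x

lemma heatS_nonneg (hg : IsGraph q) (hf : ∀ x, 0 ≤ f x) {t : ℝ} (ht : 0 ≤ t) (x : V) :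
    0 ≤ heatS q S t f x :=
  le_heatS_of_subsolution hg (φ := fun _ _ => 0) (φ' := fun _ _ => 0)
    (fun _ _ s => hasDerivAt_const s 0) (fun _ _ _ _ => (lap_const q 0 _).ge)
    (fun _ _ _ _ => le_rfl) (fun x _ => hf x) ht x

lemma heatS_le (hg : IsGraph q) {C : ℝ} (hfC : ∀ x, f x ≤ C) (hC : 0 ≤ C) {t : ℝ} (ht : 0 ≤ t)
    (x : V) : heatS q S t f x ≤ C :=
  heatS_le_of_supersolution hg (ψ := fun _ _ => C) (ψ' := fun _ _ => 0)
    (fun _ _ s => hasDerivAt_const s C) (fun _ _ _ _ => (lap_const q C _).le)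
    (fun _ _ _ _ => hC) (fun x _ => hfC x) ht x

lemma lapS_heatS_le_lap (hg : IsGraph q) (hf : ∀ x, 0 ≤ f x) {t : ℝ} (ht : 0 ≤ t) (x : V) :
    lapS q S (heatS q S t f) x ≤ lap q (heatS q S t f) x :=
  lapS_le_lap (hg.1 x) (heatS_nonneg hg hf ht) (heatS_of_not_mem hg t f)

lemma heatS_mono (hg : IsGraph q) {T : Finset V} (hST : S ⊆ T) (hf : ∀ x, 0 ≤ f x) {t : ℝ}
    (ht : 0 ≤ t) (x : V) : heatS q S t f x ≤ heatS q T t f x :=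
  le_heatS_of_subsolution hg (fun y _ s => hasDerivAt_heatS hg S f y s)
    (fun s hs y _ => lapS_heatS_le_lap hg hf hs y)
    (fun s _ y hy => (heatS_of_not_mem hg s f fun h => hy (hST h)).le)
    (fun y _ => by rw [heatS_zero_time hg]; split_ifs <;> simp [hf y]) ht x

end Comparison

section HeatSemigroup

variable {q : V → V → ℝ} {f : V → ℝ} {C t : ℝ}

lemma heatS_le_heatPos (hg : IsGraph q) (hfC : ∀ x, f x ≤ C) (hC : 0 ≤ C) (ht : 0 ≤ t)
    (S : Finset V) (x : V) : heatS q S t f x ≤ heatPos q t f x :=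
  le_ciSup (f := fun S => heatS q S t f x)
    ⟨C, by rintro _ ⟨T, rfl⟩; exact heatS_le hg hfC hC ht x⟩ S

lemma heatPos_le (hg : IsGraph q) (hfC : ∀ x, f x ≤ C) (hC : 0 ≤ C) (ht : 0 ≤ t) (x : V) :
    heatPos q t f x ≤ C :=
  ciSup_le fun _ => heatS_le hg hfC hC ht x

lemma tendsto_heatS_heatPos (hg : IsGraph q) (hf : ∀ x, 0 ≤ f x) (hfC : ∀ x, f x ≤ C)
    (hC : 0 ≤ C) (ht : 0 ≤ t) (x : V) :
    Tendsto (fun S => heatS q S t f x) atTop (𝓝 (heatPos q t f x)) :=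
  tendsto_atTop_ciSup (fun _ _ hST => heatS_mono hg hST hf ht x)
    ⟨C, by rintro _ ⟨T, rfl⟩; exact heatS_le hg hfC hC ht x⟩

lemma heatPos_one (hg : IsGraph q) (hsc : StochasticallyComplete q) (ht : 0 ≤ t) (x : V) :
    heatPos q t (fun _ => 1) x = 1 := by
  have hzero : heatPos q t (fun _ => 0) x = 0 :=
    le_antisymm (heatPos_le hg (fun _ => le_rfl) le_rfl ht x)
      ((heatS_nonneg hg (fun _ => le_rfl) ht x).trans
        (heatS_le_heatPos hg (fun _ => le_rfl) le_rfl ht ∅ x))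
  have h := hsc t ht x
  simp only [heat, max_eq_left zero_le_one, neg_nonpos.2 zero_le_one, max_eq_right,
    hzero, sub_zero] at h
  exact h

end HeatSemigroup

def IntertwinesLap {U : Type*} (qt : U → U → ℝ) (q : V → V → ℝ) (π : U → V) : Prop :=
  ∀ (f : V → ℝ) (u : U), lap qt (fun r => f (π r)) u = lap q f (π u)

lemma IsCouplingGraph.intertwinesLap_fst {q : V → V → ℝ} {qt : V × V → V × V → ℝ}
    (h : IsCouplingGraph q qt) : IntertwinesLap qt q Prod.fst :=
  fun f => (h.2 f).1

lemma IsCouplingGraph.intertwinesLap_snd {q : V → V → ℝ} {qt : V × V → V × V → ℝ}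
    (h : IsCouplingGraph q qt) : IntertwinesLap qt q Prod.snd :=
  fun f => (h.2 f).2

section Intertwining

variable {U : Type*} {q : V → V → ℝ} {qt : U → U → ℝ} {π π' : U → V} {g : V → ℝ} {C t : ℝ}

lemma heatS_comp_le (hg : IsGraph q) (hgt : IsGraph qt) (hπ : IntertwinesLap qt q π)
    (hg0 : ∀ x, 0 ≤ g x) (ht : 0 ≤ t) (St : Finset U) (u : U) :
    heatS qt St t (fun r => g (π r)) u ≤ heatS q (St.image π) t g (π u) :=
  heatS_le_of_supersolution hgt (ψ := fun s r => heatS q (St.image π) s g (π r))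
    (ψ' := fun s r => lapS q (St.image π) (heatS q (St.image π) s g) (π r))
    (fun r _ s => hasDerivAt_heatS hg _ g (π r) s)
    (fun s _ r hr => by
      rw [lapS, if_pos (Finset.mem_image_of_mem π hr)]
      exact (hπ (heatS q (St.image π) s g) r).le)
    (fun s hs r _ => heatS_nonneg hg hg0 hs _)
    (fun r hr => by rw [heatS_zero_time hg, if_pos (Finset.mem_image_of_mem π hr)]) ht u

lemma heatS_comp_ge (hg : IsGraph q) (hgt : IsGraph qt) (hπ : IntertwinesLap qt q π)
    (hπ' : IntertwinesLap qt q π') (hg0 : ∀ x, 0 ≤ g x) (hgC : ∀ x, g x ≤ C) (hC : 0 ≤ C)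
    {S₁ S₂ : Finset V} {St : Finset U} (hSt : ∀ r, π' r ∈ S₁ → π r ∈ S₂ → r ∈ St)
    (ht : 0 ≤ t) (u : U) :
    heatS q S₂ t g (π u) + C * heatS q S₁ t (fun _ => 1) (π' u)
        + C * heatS q S₂ t (fun _ => 1) (π u) - 2 * C ≤ heatS qt St t (fun r => g (π r)) u := by
  set h₂ : ℝ → V → ℝ := fun s => heatS q S₂ s g
  set e₁ : ℝ → V → ℝ := fun s => heatS q S₁ s fun _ => 1
  set e₂ : ℝ → V → ℝ := fun s => heatS q S₂ s fun _ => 1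
  have hone : ∀ x : V, (0 : ℝ) ≤ 1 := fun _ => zero_le_one
  refine le_heatS_of_subsolution hgt
    (φ := fun s r => h₂ s (π r) + C * e₁ s (π' r) + C * e₂ s (π r) - 2 * C)
    (φ' := fun s r => lapS q S₂ (h₂ s) (π r) + C * lapS q S₁ (e₁ s) (π' r)
      + C * lapS q S₂ (e₂ s) (π r))
    (fun r _ s => ((((hasDerivAt_heatS hg S₂ g (π r) s).add
      ((hasDerivAt_heatS hg S₁ _ (π' r) s).const_mul C)).add
      ((hasDerivAt_heatS hg S₂ _ (π r) s).const_mul C)).sub_const (2 * C)))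
    (fun s hs r _ => ?_) (fun s hs r hr => ?_) (fun r _ => ?_) ht u
  · have hlap : lap qt (fun r => h₂ s (π r) + C * e₁ s (π' r) + C * e₂ s (π r) - 2 * C) r
        = lap q (h₂ s) (π r) + C * lap q (e₁ s) (π' r) + C * lap q (e₂ s) (π r) := by
      rw [lap_sub_const, lap_add hgt, lap_add hgt, lap_const_mul, lap_const_mul, hπ (h₂ s),
        hπ' (e₁ s), hπ (e₂ s)]
    rw [hlap]
    have := lapS_heatS_le_lap hg hg0 hs (π r) (S := S₂)
    have := lapS_heatS_le_lap hg hone hs (π' r) (S := S₁)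
    have := lapS_heatS_le_lap hg hone hs (π r) (S := S₂)
    gcongr
  · have := heatS_le hg hgC hC hs (π r) (S := S₂)
    have := heatS_le hg (fun _ => le_rfl) zero_le_one hs (π' r) (S := S₁)
    have := heatS_le hg (fun _ => le_rfl) zero_le_one hs (π r) (S := S₂)
    by_cases h₁ : π' r ∈ S₁
    · have h₂r : π r ∉ S₂ := fun h => hr (hSt r h₁ h)
      simp only [h₂, e₁, e₂, heatS_of_not_mem hg s _ h₂r]
      nlinarith
    · simp only [h₂, e₁, e₂, heatS_of_not_mem hg s _ h₁]
      nlinarith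
  · simp only [h₂, e₁, e₂, heatS_zero_time hg]
    have := hg0 (π r)
    have := hgC (π r)
    split_ifs <;> nlinarith

theorem heatPos_comp (hg : IsGraph q) (hgt : IsGraph qt) (hsc : StochasticallyComplete q)
    (hπ : IntertwinesLap qt q π) (hπ' : IntertwinesLap qt q π')
    (hinj : Injective fun u => (π' u, π u)) (hg0 : ∀ x, 0 ≤ g x)
    (hgC : ∀ x, g x ≤ C) (ht : 0 ≤ t) (u : U) :
    heatPos qt t (fun r => g (π r)) u = heatPos q t g (π u) := by
  have hC : 0 ≤ C := (hg0 (π u)).trans (hgC (π u))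
  refine le_antisymm (ciSup_le fun St => (heatS_comp_le hg hgt hπ hg0 ht St u).trans
    (heatS_le_heatPos hg hgC hC ht _ _)) ?_
  set box : Finset V × Finset V → Finset U := fun S =>
    (S.1 ×ˢ S.2).preimage (fun u => (π' u, π u)) hinj.injOn
  have hbox : ∀ S r, π' r ∈ S.1 → π r ∈ S.2 → r ∈ box S := fun S r h₁ h₂ => by
    simp [box, h₁, h₂]
  have hone := tendsto_heatS_heatPos hg (fun _ => zero_le_one) (fun _ => le_rfl) zero_le_one ht
  have hlim := ((((tendsto_heatS_heatPos hg hg0 hgC hC ht (π u)).comp tendsto_snd).add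
    (((hone (π' u)).comp tendsto_fst).const_mul C)).add
    (((hone (π u)).comp tendsto_snd).const_mul C)).sub_const (2 * C)
  rw [heatPos_one hg hsc ht, heatPos_one hg hsc ht, mul_one,
    show heatPos q t g (π u) + C + C - 2 * C = heatPos q t g (π u) by ring] at hlim
  refine le_of_tendsto hlim (Eventually.of_forall fun S => ?_)
  exact (heatS_comp_ge hg hgt hπ hπ' hg0 hgC hC (hbox S) ht u).trans
    (heatS_le_heatPos hgt (fun r => hgC (π r)) hC ht _ u)

theorem heat_comp (hg : IsGraph q) (hgt : IsGraph qt) (hsc : StochasticallyComplete q)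
    (hπ : IntertwinesLap qt q π) (hπ' : IntertwinesLap qt q π')
    (hinj : Injective fun u => (π' u, π u)) {f : V → ℝ} (hf : IsBoundedFun f) (ht : 0 ≤ t)
    (u : U) : heat qt t (fun r => f (π r)) u = heat q t f (π u) := by
  obtain ⟨C, hC⟩ := hf
  have hC0 : 0 ≤ C := (abs_nonneg _).trans (hC (π u))
  rw [heat, heat,
    heatPos_comp hg hgt hsc hπ hπ' hinj (g := fun x => max (f x) 0) (fun _ => le_max_right _ _)
      (fun x => max_le ((le_abs_self _).trans (hC x)) hC0) ht u,
    heatPos_comp hg hgt hsc hπ hπ' hinj (g := fun x => max (-f x) 0) (fun _ => le_max_right _ _)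
      (fun x => max_le ((neg_le_abs _).trans (hC x)) hC0) ht u]

end Intertwining

theorem heat_tensorization_general
    {V : Type*} (q : V → V → ℝ) (qt : V × V → V × V → ℝ)
    (hg : IsGraph q) (hsc : StochasticallyComplete q)
    (hcpl : IsCouplingGraph q qt)
    (f : V → ℝ) (hf : IsBoundedFun f) (t : ℝ) (ht : 0 ≤ t) :
    (∀ p : V × V, heat qt t (fun r => f r.2) p = heat q t f p.2) ∧
      ∀ p : V × V, heat qt t (fun r => f r.1) p = heat q t f p.1 :=
  ⟨heat_comp hg hcpl.1 hsc hcpl.intertwinesLap_snd hcpl.intertwinesLap_fst injective_id hf ht,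
    heat_comp hg hcpl.1 hsc hcpl.intertwinesLap_fst hcpl.intertwinesLap_snd Prod.swap_injective
      hf ht⟩

theorem heat_tensorization
    {V : Type*} [Countable V] (q : V → V → ℝ) (qt : V × V → V × V → ℝ)
    (hg : IsGraph q) (hrev : IsReversible q) (hsc : StochasticallyComplete q)
    (hcpl : IsCouplingGraph q qt)
    (f : V → ℝ) (hf : IsBoundedFun f) (t : ℝ) (ht : 0 ≤ t) :
    (∀ p : V × V, heat qt t (fun r => f r.2) p = heat q t f p.2) ∧
      ∀ p : V × V, heat qt t (fun r => f r.1) p = heat q t f p.1 :=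
  heat_tensorization_general q qt hg hsc hcpl f hf t ht

end OllivierGraph
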